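/- Let p be a blp of limit or successor type of length n, and let a = s_{n,−3}. Then for every natural number m, p.E(m) is well defined (i.e., at every stage the auxiliary blp q_{m+1} is copyable), and the length of p.E(m) equals 2^m·(n−a) + (a−1). -/

import Mathlib

/-! ## Basic Laver patterns (raw data) -/

/-- `negGet l k` is the `k`-th entry of `l` counted from the end (1-indexed),
    i.e. `l_{-k}` in the paper's notation. -/
def negGet (l : List ℕ) (k : ℕ) : ℕ := l.getD (l.length - k) 0

/-- Raw data of a basic Laver pattern: a list of rows and a list of step lengths. -/
structure Blp where
  rows : List (List ℕ)
  steps : List ℕ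

namespace Blp

/-- The length (number of rows) of the pattern. -/
def n (p : Blp) : ℕ := p.rows.length

/-- The `i`-th row (1-indexed). -/
def rowOf (p : Blp) (i : ℕ) : List ℕ := p.rows.getD (i - 1) []

/-- The step length of row `i` (1-indexed). -/
def stepOf (p : Blp) (i : ℕ) : ℕ := p.steps.getD (i - 1) 0

def lastRow (p : Blp) : List ℕ := p.rows.getLastD []

def lastStep (p : Blp) : ℕ := p.steps.getLastD 0

/-- `p` is a basic Laver pattern (blp). -/
def IsValid (p : Blp) : Prop :=
  2 ≤ p.n ∧ p.steps.length = p.n ∧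
  p.rowOf 1 = [0, 1, 2] ∧ p.rowOf 2 = [0, 1, 2, 3] ∧
  ∀ i, 1 ≤ i → i ≤ p.n →
    List.Chain' (· < ·) (p.rowOf i) ∧
    3 ≤ (p.rowOf i).length ∧
    negGet (p.rowOf i) 2 = i ∧ negGet (p.rowOf i) 1 = i + 1 ∧
    (Odd (p.rowOf i).length → p.stepOf i = ((p.rowOf i).length - 1) / 2) ∧
    ((p.rowOf i).length = 4 → p.stepOf i = 1) ∧
    (Even (p.rowOf i).length → 4 < (p.rowOf i).length →
      p.stepOf i = (p.rowOf i).length / 2 ∨ p.stepOf i = (p.rowOf i).length / 2 - 1)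

/-- Delete the last row. -/
def del (p : Blp) : Blp := ⟨p.rows.dropLast, p.steps.dropLast⟩

end Blp

/-- The partial map `ap(s,t,ℓ)` is defined. -/
def ApDefined (s t : List ℕ) (ℓ : ℕ) : Prop :=
  0 < negGet t (ℓ + 2) ∧ ℓ + 2 ≤ t.length ∧
  (∀ x ∈ s, x ≤ negGet t (ℓ + 1)) ∧
  (∀ x ∈ s, t.headD 0 ≤ x → x < negGet t (ℓ + 2) → x ∈ t)

/-- The effect of `ap(·,t,ℓ)` on a single entry. -/
def apEntry (t : List ℕ) (ℓ x : ℕ) : ℕ :=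
  if x < t.headD 0 then x
  else if x < negGet t (ℓ + 2) then t.getD (t.idxOf x + ℓ) 0
  else negGet t 2 + x - negGet t (ℓ + 2)

/-- The sequence `ap(s,t,ℓ)` (total function; meaningful when `ApDefined s t ℓ`). -/
def apF (s t : List ℕ) (ℓ : ℕ) : List ℕ := s.map (apEntry t ℓ)

namespace Blp

/-- `a = s_{n,-ℓ_n-2}` in the definition of the copying operation. -/
def copyA (p : Blp) : ℕ := negGet p.lastRow (p.lastStep + 2)

/-- `b = s_{n,-ℓ_n-1} - 1` in the definition of the copying operation. -/
def copyB (p : Blp) : ℕ := negGet p.lastRow (p.lastStep + 1) - 1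

/-- `p` is copyable. -/
def Copyable (p : Blp) : Prop :=
  3 ≤ p.n ∧
  ∀ i ≤ p.copyB - p.copyA, ApDefined (p.rowOf (p.copyA + i)) p.lastRow p.lastStep

/-- `p.Copied` (meaningful when `p` is copyable). -/
def Copied (p : Blp) : Blp :=
  ⟨p.rows.dropLast ++
     (List.range (p.copyB - p.copyA + 1)).map
       (fun i => apF (p.rowOf (p.copyA + i)) p.lastRow p.lastStep),
   p.steps.dropLast ++
     (List.range (p.copyB - p.copyA + 1)).map (fun i => p.stepOf (p.copyA + i))⟩

/-- The zero blp is the unique blp of length 2. -/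
def IsZero (p : Blp) : Prop := p.n = 2

/-- `p` is of successor type. -/
def IsSuccType (p : Blp) : Prop := p.lastRow.take 3 = [0, 1, 2] ∧ p.lastRow.length = 5

/-- `p` is of limit type. -/
def IsLimitType (p : Blp) : Prop :=
  p.lastRow.take 3 = [0, 1, 2] ∧ p.lastRow.length = 6 ∧ p.lastStep = 3

/-- Append the auxiliary row `(a, n'+1, n'+2)` (with step length 1) to `q`. -/
def eExtend (q : Blp) (a : ℕ) : Blp :=
  ⟨q.rows ++ [[a, q.n + 1, q.n + 2]], q.steps ++ [1]⟩

/-- The operation `p.E(m)` for `p` of limit or successor type. -/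
def Eop (p : Blp) : ℕ → Blp
  | 0 => p.del
  | m + 1 => (eExtend (p.Eop m) (negGet p.lastRow 3)).Copied

end Blp

/-- Row `i + r` in the completion operation `comp(p,i,T)`:
insert `t_1, …, t_{r+1}` after position `ℓ` of `s` and replace the last entry by
`i+1, …, i+r+1`. -/
def compRow (s : List ℕ) (ℓ i r : ℕ) (T : List ℕ) : List ℕ :=
  (s.take ℓ ++ T.take (r + 1) ++ s.drop ℓ).dropLast ++
    (List.range (r + 1)).map (fun j => i + 1 + j)

namespace Blp

/-- The completion operation `comp(p,i,T)`. -/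
def comp (p : Blp) (i : ℕ) (T : List ℕ) : Blp :=
  ⟨p.rows.take (i - 1) ++
     (List.range (T.length + 1)).map (fun r => compRow (p.rowOf i) (p.stepOf i) i r T) ++
     (p.rows.drop i).map (List.map (fun x => if i < x then x + T.length else x)),
   p.steps.take (i - 1) ++
     ((List.range T.length).map (fun r => p.stepOf i + r + 1) ++ [p.stepOf i + T.length]) ++
     p.steps.drop i⟩

/-- The (descending) chain `x_1, x_2, …` with `x_{r+1} = s_{x_r,-3}`, stopping
as soon as the value is `≤ lo` (that final value is not collected). -/
def descChain (p : Blp) (lo : ℕ) : ℕ → ℕ → List ℕ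
  | 0, _ => []
  | fuel + 1, x =>
    let nx := negGet (p.rowOf x) 3
    if nx ≤ lo then [] else nx :: p.descChain lo fuel nx

/-- `fullcomp(p,i)` for a suitable row `i`. -/
def fullcomp (p : Blp) (i : ℕ) : Blp :=
  p.comp i
    ((p.descChain ((p.rowOf i).getD (p.stepOf i - 1) 0)
        ((p.rowOf i).getD (p.stepOf i) 0 + 1) ((p.rowOf i).getD (p.stepOf i) 0)).reverse)

/-- The (increasing) list of indices of suitable rows (rows of odd length `≥ 5`). -/
def suitableIdx (p : Blp) : List ℕ :=
  (List.range p.n).filterMap fun j =>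
    if 5 ≤ (p.rowOf (j + 1)).length ∧ (p.rowOf (j + 1)).length % 2 = 1 then some (j + 1)
    else none

/-- The modification operation `p.M`: apply `fullcomp` to `p.Copied` at the suitable
indices of `p`, in decreasing order. -/
def Mop (p : Blp) : Blp := p.suitableIdx.reverse.foldl (fun q i => q.fullcomp i) p.Copied

end Blp

/- The graph of the partial recursive function `f(p,m)` of the paper
(`FRel p m r` means `f(p,m)` is defined with value `r`), together with the graph
`FIter q k x r` of the `k`-fold iterate of `x ↦ f(q,x)` at `x`. -/
mutual
  inductive FRel : Blp → ℕ → ℕ → Prop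
    | zero (p : Blp) (m : ℕ) : p.IsZero → FRel p m (m * 2 ^ m)
    | notCopyable (p : Blp) (m r : ℕ) :
        ¬p.IsZero → ¬p.Copyable → FRel p.del m r → FRel p m r
    | succ (p : Blp) (m r : ℕ) :
        ¬p.IsZero → p.Copyable → p.IsSuccType → FIter p.del (2 ^ m) m r → FRel p m r
    | limit (p : Blp) (m r : ℕ) :
        ¬p.IsZero → p.Copyable → ¬p.IsSuccType → p.IsLimitType →
        FRel (p.Eop m) m r → FRel p m r
    | trans (p : Blp) (m r : ℕ) :
        ¬p.IsZero → p.Copyable → ¬p.IsSuccType → ¬p.IsLimitType →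
        FRel p.Mop m r → FRel p m r
  inductive FIter : Blp → ℕ → ℕ → ℕ → Prop
    | base (q : Blp) (x : ℕ) : FIter q 0 x x
    | step (q : Blp) (k x y r : ℕ) : FIter q k x y → FRel q y r → FIter q (k + 1) x r
end

/-! ## Ordinals below ε₀ via `ONote`, fundamental sequences, pattern sequences -/

/-- `o` denotes a successor ordinal (for `o` in normal form). -/
def isSuccO : ONote → Bool
  | .zero => false
  | .oadd e _ .zero => decide (e = ONote.zero)
  | .oadd _ _ (.oadd e' c' a') => isSuccO (.oadd e' c' a')

/-- The predecessor of a (successor) ordinal notation. -/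
def predO : ONote → ONote
  | .zero => .zero
  | .oadd e c .zero => if e = ONote.zero then ONote.ofNat ((c : ℕ) - 1) else .oadd e c .zero
  | .oadd e c (.oadd e' c' a') => .oadd e c (predO (.oadd e' c' a'))

/-- The canonical fundamental sequence: `fsO o k` is `o[k]` (meaningful for `o` in
normal form denoting a limit ordinal), obtained from the unique decomposition
`o = β + ω^γ` via `(ω^(δ+1))[k] = ω^δ·k` and `(ω^γ)[k] = ω^(γ[k])` for `γ` limit. -/
def fsO : ONote → ℕ → ONote
  | .zero, _ => .zero
  | .oadd e c (.oadd e' c' a'), k => .oadd e c (fsO (.oadd e' c' a') k)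
  | .oadd e c .zero, k =>
    let t : ONote :=
      if e = ONote.zero then .zero
      else if isSuccO e then
        (if h : k = 0 then .zero else .oadd (predO e) ⟨k, Nat.pos_of_ne_zero h⟩ .zero)
      else .oadd (fsO e k) 1 .zero
    if c = 1 then t else .oadd e (c - 1) t

/-- Auxiliary for the pattern sequence: process the Cantor normal form terms of `o`
from the left, starting from the already-computed list `L`. -/
def psFrom : List ℕ → ONote → List ℕ
  | L, .zero => L
  | L, .oadd e c a =>
    let pe := psFrom [] e
    let step : List ℕ → List ℕ := fun M =>
      if e = ONote.zero then M ++ [0]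
      else M ++ [0] ++ pe.map (· + (M.length + 1)) ++ [M.length + 1]
    psFrom (step^[(c : ℕ)] L) a

/-- The pattern sequence `ps(α)` of an ordinal `α < ε₀`. -/
def psO (o : ONote) : List ℕ := psFrom [] o

/-- The fundamental sequence for `ε₀` itself: `ε₀[0] = 1`, `ε₀[n+1] = ω^(ε₀[n])`. -/
def eps0fs : ℕ → ONote
  | 0 => 1
  | k + 1 => .oadd (eps0fs k) 1 .zero

/-- The graph of the Hardy hierarchy `H_α(n)` for `α < ε₀`:
`HardyRel o n r` means `H_{repr o}(n) = r`. -/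
inductive HardyRel : ONote → ℕ → ℕ → Prop
  | zero (n : ℕ) : HardyRel 0 n n
  | succ (o : ONote) (n r : ℕ) : HardyRel o (n + 1) r → HardyRel (o + 1) n r
  | limit (o : ONote) (n r : ℕ) :
      Order.IsSuccLimit (ONote.repr o) → HardyRel (fsO o n) (n + 1) r → HardyRel o n r

/- The graph of the `m`-hierarchy `m(α,n)` for `α < ε₀` (`MRel o n r` means
`m(repr o, n) = r`), together with the graph `MIter o k x r` of the `k`-fold
iterate of `x ↦ m(repr o, x)` at `x`. -/
mutual
  inductive MRel : ONote → ℕ → ℕ → Prop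
    | zero (n : ℕ) : MRel 0 n (n ^ n)
    | succ (o : ONote) (n r : ℕ) : MIter o n n r → MRel (o + 1) n r
    | limit (o : ONote) (n r : ℕ) :
        Order.IsSuccLimit (ONote.repr o) → MRel (fsO o n) n r → MRel o n r
  inductive MIter : ONote → ℕ → ℕ → ℕ → Prop
    | base (o : ONote) (x : ℕ) : MIter o 0 x x
    | step (o : ONote) (k x y r : ℕ) : MIter o k x y → MRel o y r → MIter o (k + 1) x r
end

/-! ## The specific patterns `q_n`, `p_α` -/

/-- The blp `q_n` with `2^n + 4` rows. -/
def qBlp (n : ℕ) : Blp :=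
  ⟨[[0, 1, 2], [0, 1, 2, 3], [0, 1, 2, 3, 4]] ++
     (List.range (2 ^ n + 1)).map (fun j => [0, 1, 2, j + 3, j + 4, j + 5]),
   [1, 1, 2] ++ List.replicate (2 ^ n + 1) 3⟩

/-- The Steinhaus–Moser functions `m_k` for finite `k`. -/
def mSMfin : ℕ → ℕ → ℕ
  | 0, n => n ^ n
  | k + 1, n => (mSMfin k)^[n] n

/-- The Steinhaus–Moser functions `m_{ω+k}`; `mSMomega 0 = m_ω` with `m_ω(n) = m_n(n)`. -/
def mSMomega : ℕ → ℕ → ℕ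
  | 0, n => mSMfin n n
  | k + 1, n => (mSMomega k)^[n] n

/-- The canonical blps `p_k` for finite `k`. -/
def pFin : ℕ → Blp
  | 0 => ⟨[[0, 1, 2], [0, 1, 2, 3]], [1, 1]⟩
  | k + 1 =>
    ⟨(pFin k).rows ++ [[0, 1, 2, (pFin k).n + 1, (pFin k).n + 2]], (pFin k).steps ++ [2]⟩

/-- The canonical blps `p_{ω+k}`. -/
def pOmegaBlp : ℕ → Blp
  | 0 => ⟨[[0, 1, 2], [0, 1, 2, 3], [0, 1, 2, 3, 4], [0, 1, 2, 3, 4, 5]], [1, 1, 2, 3]⟩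
  | k + 1 =>
    ⟨(pOmegaBlp k).rows ++ [[0, 1, 2, (pOmegaBlp k).n + 1, (pOmegaBlp k).n + 2]],
     (pOmegaBlp k).steps ++ [2]⟩

/-- The canonical blps `p_α` for `α < ω + ω`, with `Sum.inl k ↦ p_k` and
`Sum.inr k ↦ p_{ω+k}`. -/
def pSM : ℕ ⊕ ℕ → Blp
  | .inl k => pFin k
  | .inr k => pOmegaBlp k

/-- The Steinhaus–Moser functions `m_α` for `α < ω + ω`, with `Sum.inl k ↦ m_k` and
`Sum.inr k ↦ m_{ω+k}`. -/
def mSM : ℕ ⊕ ℕ → ℕ → ℕ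
  | .inl k => mSMfin k
  | .inr k => mSMomega k

/-- The canonical blp `p_α` for `α < ε₀`, built from the pattern sequence `ps(α)`. -/
def pOf (o : ONote) : Blp :=
  ⟨[[0, 1, 2], [0, 1, 2, 3]] ++
     (List.range (psO o).length).map (fun j =>
       if (psO o).getD j 0 = 0 then [0, 1, 2, j + 3, j + 4]
       else [0, 1, 2, (psO o).getD j 0 + 2, j + 3, j + 4]),
   [1, 1] ++ (psO o).map (fun t => if t = 0 then 2 else 3)⟩

/-! ## Knuth arrows and Graham's number -/

/-- Knuth's up-arrow: `knuth m a b = a ↑^m b` (with `↑^0` multiplication and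
`↑^1` exponentiation). -/
def knuth : ℕ → ℕ → ℕ → ℕ
  | 0, a, b => a * b
  | 1, a, b => a ^ b
  | _ + 2, _, 0 => 1
  | m + 2, a, b + 1 => knuth (m + 1) a (knuth (m + 2) a b)
  termination_by m _ b => (m, b)

/-- `grahamSeq k = g_{k+1}`: `g_1 = 3↑↑↑↑3`, `g_{k+1} = 3 ↑^{g_k} 3`. -/
def grahamSeq : ℕ → ℕ
  | 0 => knuth 4 3 3
  | k + 1 => knuth (grahamSeq k) 3 3

/-- Graham's number `G = g_64`. -/
def grahamNumber : ℕ := grahamSeq 63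

section EopProofAux

lemma getLastD_eq_getD' {α : Type*} (l : List α) (h : l ≠ []) (d : α) :
    l.getLastD d = l.getD (l.length - 1) d := by
  rw [List.getD_eq_getElem _ _ (by cases l; simp at h; simp)]
  rw [List.getLastD_eq_getLast?, List.getLast?_eq_getElem?]
  simp [List.getElem?_eq_getElem (show l.length - 1 < l.length by cases l; simp at h; simp)]

lemma mem_le_negGet_one : ∀ (l : List ℕ), l.Chain' (· < ·) → ∀ x ∈ l, x ≤ negGet l 1
  | [], _, x, hx => by simp at hx
  | [a], _, x, hx => by
      simp only [List.mem_singleton] at hx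
      simp [negGet, hx]
  | a :: b :: t, h, x, hx => by
      rw [List.Chain', List.isChain_cons_cons] at h
      have ih := mem_le_negGet_one (b :: t) h.2
      have hb := ih b (by simp)
      have hn1 : negGet (a :: b :: t) 1 = negGet (b :: t) 1 := by
        simp [negGet]
      rcases List.mem_cons.mp hx with rfl | hx
      · omega
      · have := ih x hx; omega

/-- The per-row bound invariant: every entry of row `i` is at most `i+1`. -/
def RowsOK (q : Blp) : Prop := ∀ i, 1 ≤ i → i ≤ q.n → ∀ x ∈ q.rowOf i, x ≤ i + 1

lemma eExtend_rowOf (q : Blp) (a j : ℕ) (hj1 : 1 ≤ j) (hj : j ≤ q.n) :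
    (q.eExtend a).rowOf j = q.rowOf j := by
  unfold Blp.eExtend Blp.rowOf
  simp only
  exact List.getD_append _ _ _ _ (by
    have : q.rows.length = q.n := rfl
    omega)

lemma eExtend_lastRow (q : Blp) (a : ℕ) :
    (q.eExtend a).lastRow = [a, q.n + 1, q.n + 2] := by
  unfold Blp.eExtend Blp.lastRow
  exact List.getLastD_concat

lemma eExtend_lastStep (q : Blp) (a : ℕ) : (q.eExtend a).lastStep = 1 := by
  unfold Blp.eExtend Blp.lastStep
  exact List.getLastD_concat

lemma eExtend_copyA (q : Blp) (a : ℕ) : (q.eExtend a).copyA = a := by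
  unfold Blp.copyA
  rw [eExtend_lastRow, eExtend_lastStep]
  simp [negGet]

lemma eExtend_copyB (q : Blp) (a : ℕ) : (q.eExtend a).copyB = q.n := by
  unfold Blp.copyB
  rw [eExtend_lastRow, eExtend_lastStep]
  simp [negGet]

lemma eExtend_n (q : Blp) (a : ℕ) : (q.eExtend a).n = q.n + 1 := by
  show (q.rows ++ [[a, q.n + 1, q.n + 2]]).length = q.rows.length + 1
  simp

lemma step_copyable (q : Blp) (a : ℕ) (ha2 : 2 ≤ a) (han : a ≤ q.n) (hq2 : 2 ≤ q.n)
    (hok : RowsOK q) : (q.eExtend a).Copyable := by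
  constructor
  · rw [eExtend_n]; omega
  · intro i hi
    rw [eExtend_copyA, eExtend_copyB] at hi
    rw [eExtend_copyA, eExtend_lastRow, eExtend_lastStep]
    rw [eExtend_rowOf q a (a + i) (by omega) (by omega)]
    have h3 : negGet [a, q.n + 1, q.n + 2] (1 + 2) = a := by simp [negGet]
    have h2' : negGet [a, q.n + 1, q.n + 2] (1 + 1) = q.n + 1 := by simp [negGet]
    refine ⟨?_, ?_, ?_, ?_⟩
    · rw [h3]; omega
    · simp
    · intro x hx
      have := hok (a + i) (by omega) (by omega) x hx
      rw [h2']
      omega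
    · intro x hx h1 h2
      rw [h3] at h2
      simp only [List.headD_cons] at h1
      omega

lemma step_copied (q : Blp) (a : ℕ) (ha2 : 2 ≤ a) (han : a ≤ q.n) (hq2 : 2 ≤ q.n)
    (hok : RowsOK q) :
    RowsOK (q.eExtend a).Copied ∧ (q.eExtend a).Copied.n = 2 * q.n - a + 1 := by
  have hrows : (q.eExtend a).Copied.rows =
      q.rows ++ (List.range (q.n - a + 1)).map
        (fun i => apF ((q.eExtend a).rowOf (a + i)) [a, q.n + 1, q.n + 2] 1) := by
    unfold Blp.Copied
    rw [eExtend_copyA, eExtend_copyB, eExtend_lastRow, eExtend_lastStep]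
    simp only
    congr 1
    show (q.rows ++ [[a, q.n + 1, q.n + 2]]).dropLast = q.rows
    exact List.dropLast_concat
  have hn : (q.eExtend a).Copied.n = 2 * q.n - a + 1 := by
    show (q.eExtend a).Copied.rows.length = _
    rw [hrows]
    simp
    have : q.rows.length = q.n := rfl
    omega
  refine ⟨?_, hn⟩
  intro i hi1 hi2
  rw [hn] at hi2
  have hql : q.rows.length = q.n := rfl
  by_cases hle : i ≤ q.n
  · have : (q.eExtend a).Copied.rowOf i = q.rowOf i := by
      unfold Blp.rowOf
      rw [hrows]
      exact List.getD_append _ _ _ _ (by omega)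
    rw [this]
    exact hok i hi1 hle
  · push_neg at hle
    set j := i - q.n - 1 with hj
    have hjlt : j < q.n - a + 1 := by omega
    have hrow : (q.eExtend a).Copied.rowOf i =
        apF ((q.eExtend a).rowOf (a + j)) [a, q.n + 1, q.n + 2] 1 := by
      show ((q.eExtend a).Copied.rows).getD (i - 1) [] = _
      rw [hrows]
      rw [List.getD_append_right _ _ _ _ (by omega)]
      have hidx : i - 1 - q.rows.length = j := by omega
      rw [hidx]
      rw [List.getD_eq_getElem _ _
        (by simp only [List.length_map, List.length_range]; omega)]
      rw [List.getElem_map, List.getElem_range]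
    rw [hrow, eExtend_rowOf q a (a + j) (by omega) (by omega)]
    intro x hx
    unfold apF at hx
    rw [List.mem_map] at hx
    obtain ⟨y, hy, rfl⟩ := hx
    have hyb := hok (a + j) (by omega) (by omega) y hy
    unfold apEntry
    have h3 : negGet [a, q.n + 1, q.n + 2] (1 + 2) = a := by simp [negGet]
    have h2' : negGet [a, q.n + 1, q.n + 2] 2 = q.n + 1 := by simp [negGet]
    rw [h3, h2']
    simp only [List.headD_cons]
    split <;> omega

lemma lastRow_eq_rowOf (p : Blp) (h : 1 ≤ p.n) : p.lastRow = p.rowOf p.n := by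
  have hql : p.rows.length = p.n := rfl
  unfold Blp.lastRow Blp.rowOf
  rw [getLastD_eq_getD' p.rows (by intro hnil; rw [hnil] at hql; simp at hql; omega) []]
  rw [hql]

lemma a_facts (p : Blp) (hval : p.IsValid) (ht : p.IsLimitType ∨ p.IsSuccType) :
    2 ≤ negGet p.lastRow 3 ∧ negGet p.lastRow 3 + 1 ≤ p.n := by
  obtain ⟨hn2, -, -, -, hrows⟩ := hval
  obtain ⟨hch, hlen3, hng2, hng1, -⟩ := hrows p.n (by omega) le_rfl
  have hLR := lastRow_eq_rowOf p (by omega)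
  rw [hLR]
  set r := p.rowOf p.n with hr
  have hpw := List.isChain_iff_pairwise.mp hch
  rw [List.pairwise_iff_getElem] at hpw
  have htake : r.take 3 = [0, 1, 2] := by
    rcases ht with ⟨h, -⟩ | ⟨h, -⟩ <;> (rw [hLR] at h; exact h)
  have hrl : r.length = 5 ∨ r.length = 6 := by
    rcases ht with ⟨-, h, -⟩ | ⟨-, h⟩ <;> (rw [hLR] at h; omega)
  have h2v : r.getD 2 0 = 2 := by
    have h := List.take_append_drop 3 r
    rw [htake] at h
    rw [← h]
    simp
  have h23 : r.getD 2 0 < r.getD 3 0 := by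
    have e2 : r.getD 2 0 = r[2]'(by omega) := List.getD_eq_getElem r 0 (by omega)
    have e3 : r.getD 3 0 = r[3]'(by omega) := List.getD_eq_getElem r 0 (by omega)
    rw [e2, e3]
    exact hpw 2 3 (by omega) (by omega) (by omega)
  rcases hrl with h5 | h6
  · have hg3 : negGet r 3 = r.getD 2 0 := by
      unfold negGet; congr 1; omega
    have hg2 : negGet r 2 = r.getD 3 0 := by
      unfold negGet; congr 1; omega
    rw [hg3, h2v]
    rw [hg2] at hng2
    omega
  · have h34 : r.getD 3 0 < r.getD 4 0 := by
      have e3 : r.getD 3 0 = r[3]'(by omega) := List.getD_eq_getElem r 0 (by omega)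
      have e4 : r.getD 4 0 = r[4]'(by omega) := List.getD_eq_getElem r 0 (by omega)
      rw [e3, e4]
      exact hpw 3 4 (by omega) (by omega) (by omega)
    have hg3 : negGet r 3 = r.getD 3 0 := by
      unfold negGet; congr 1; omega
    have hg2 : negGet r 2 = r.getD 4 0 := by
      unfold negGet; congr 1; omega
    rw [hg3]
    rw [hg2] at hng2
    omega

lemma del_rowOf (p : Blp) (i : ℕ) (hi : i ≤ p.n - 1) (hi1 : 1 ≤ i) :
    p.del.rowOf i = p.rowOf i := by
  unfold Blp.del Blp.rowOf
  simp only
  have hql : p.rows.length = p.n := rfl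
  have h1 : i - 1 < p.rows.dropLast.length := by
    rw [List.length_dropLast]; omega
  rw [List.getD_eq_getElem _ _ h1, List.getElem_dropLast,
    ← List.getD_eq_getElem]

end EopProofAux
/-- For `p` of limit or successor type of length `n`, with
`a = s_{n,−3}`: for every `m`, `p.E(m)` is well defined (every auxiliary blp is
copyable) and has length `2^m·(n−a) + (a−1)`. -/
theorem Eop_welldefined_and_length :
    ∀ p : Blp, p.IsValid → (p.IsLimitType ∨ p.IsSuccType) → ∀ m : ℕ,
      (∀ k, k < m → (Blp.eExtend (p.Eop k) (negGet p.lastRow 3)).Copyable) ∧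
      (p.Eop m).n = 2 ^ m * (p.n - negGet p.lastRow 3) + (negGet p.lastRow 3 - 1) := by
  intro p hval htype m
  obtain ⟨ha2, han⟩ := a_facts p hval htype
  set a := negGet p.lastRow 3 with haa
  have hE0 : p.Eop 0 = p.del := rfl
  have key : ∀ m, RowsOK (p.Eop m) ∧ (p.Eop m).n = 2 ^ m * (p.n - a) + (a - 1) ∧
      ∀ k < m, (Blp.eExtend (p.Eop k) a).Copyable := by
    intro m
    induction m with
    | zero =>
      have hdn : p.del.n = p.n - 1 := by
        show p.rows.dropLast.length = _
        rw [List.length_dropLast]; rfl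
      refine ⟨?_, ?_, fun k hk => absurd hk (Nat.not_lt_zero k)⟩
      · -- RowsOK (p.Eop 0)
        rw [hE0]
        intro i hi1 hi2
        rw [hdn] at hi2
        rw [del_rowOf p i hi2 hi1]
        obtain ⟨hn2, -, -, -, hrows⟩ := hval
        obtain ⟨hch, -, -, hng1, -⟩ := hrows i hi1 (by omega)
        intro x hx
        have := mem_le_negGet_one _ hch x hx
        omega
      · rw [hE0, hdn]
        have hn2 := hval.1
        simp only [pow_zero, one_mul]
        omega
    | succ m ih =>
      obtain ⟨hok, hn, hcop⟩ := ih
      have hp1 : 1 ≤ 2 ^ m := Nat.one_le_two_pow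
      have hna : 1 ≤ p.n - a := by omega
      have hmul : p.n - a ≤ 2 ^ m * (p.n - a) := Nat.le_mul_of_pos_left _ (by omega)
      have hqa : a ≤ (p.Eop m).n := by omega
      have hq2 : 2 ≤ (p.Eop m).n := by omega
      have hc := step_copyable (p.Eop m) a ha2 hqa hq2 hok
      obtain ⟨hok', hn'⟩ := step_copied (p.Eop m) a ha2 hqa hq2 hok
      have hE : p.Eop (m + 1) = ((p.Eop m).eExtend a).Copied := rfl
      refine ⟨by rw [hE]; exact hok', ?_, ?_⟩
      · rw [hE, hn', hn]
        have h2 : 2 ^ (m + 1) * (p.n - a) = 2 * (2 ^ m * (p.n - a)) := by ring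
        omega
      · intro k hk
        rcases Nat.lt_succ_iff_lt_or_eq.mp hk with h | rfl
        · exact hcop k h
        · exact hc
  exact ⟨fun k hk => (key m).2.2 k hk, (key m).2.1⟩
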